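/- Let G=(V,E) be a finite simple undirected graph in which every vertex has positive degree, let α ∈ (0,1], and let p = pr_α(s) be a PageRank vector for a row vector s. Then for every subset of vertices S ⊆ V: p(S) = α s(S) + (1-α)·( (1/2) p(in(S) ∩ out(S)) + (1/2) p(in(S) ∪ out(S)) ). -/

import Mathlib

open Matrix Finset

/-- The lazy random walk transition matrix `W = (1/2)(I + D⁻¹A)` of a simple graph,
acting on row vectors. -/
noncomputable def lazyWalk {V : Type*} [Fintype V] [DecidableEq V] (G : SimpleGraph V)
    [DecidableRel G.Adj] : Matrix V V ℝ :=
  fun u v => (if u = v then (1 : ℝ) / 2 else 0) +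
    (if G.Adj u v then 1 / (2 * (G.degree u : ℝ)) else 0)

/-- `in(S)`: the set of directed edges `(u, v)` of `G` with head `v ∈ S`. -/
def dirIn {V : Type*} [Fintype V] [DecidableEq V] (G : SimpleGraph V)
    [DecidableRel G.Adj] (S : Finset V) : Finset (V × V) :=
  Finset.univ.filter fun e => G.Adj e.1 e.2 ∧ e.2 ∈ S

/-- `out(S)`: the set of directed edges `(u, v)` of `G` with tail `u ∈ S`. -/
def dirOut {V : Type*} [Fintype V] [DecidableEq V] (G : SimpleGraph V)
    [DecidableRel G.Adj] (S : Finset V) : Finset (V × V) :=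
  Finset.univ.filter fun e => G.Adj e.1 e.2 ∧ e.1 ∈ S

/-- `p(A) = ∑_{(u,v) ∈ A} p(u)/d(u)` for a set `A` of directed edges. -/
noncomputable def edgeSum {V : Type*} [Fintype V] [DecidableEq V] (G : SimpleGraph V)
    [DecidableRel G.Adj] (p : V → ℝ) (A : Finset (V × V)) : ℝ :=
  ∑ e ∈ A, p e.1 / (G.degree e.1 : ℝ)

/-! Summing the PageRank equation over `S` reduces the claim to
`(pW)(S) = ½ p(in(S) ∩ out(S)) + ½ p(in(S) ∪ out(S))`. The lazy half of `W` contributes `½ p(S)`,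
which equals `½ p(out(S))` because every vertex `u` spreads `p(u)` evenly over its `d(u)` out-edges;
the walk half contributes `½ p(in(S))`; and `p(in) + p(out) = p(in ∩ out) + p(in ∪ out)`. -/

namespace SimpleGraph

variable {V : Type*} [Fintype V] [DecidableEq V] (G : SimpleGraph V) [DecidableRel G.Adj]

lemma sum_dirOut {M : Type*} [AddCommMonoid M] (S : Finset V) (f : V → V → M) :
    ∑ e ∈ dirOut G S, f e.1 e.2 = ∑ u ∈ S, ∑ v ∈ G.neighborFinset u, f u v := by
  simp only [dirOut, sum_filter, Fintype.sum_prod_type, and_comm (b := _ ∈ S), ite_and,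
    sum_ite_irrel, sum_const_zero, sum_ite_mem, univ_inter, neighborFinset_eq_filter]

lemma sum_dirIn {M : Type*} [AddCommMonoid M] (S : Finset V) (f : V → V → M) :
    ∑ e ∈ dirIn G S, f e.1 e.2 = ∑ v ∈ S, ∑ u ∈ G.neighborFinset v, f u v := by
  simp only [dirIn, sum_filter, Fintype.sum_prod_type_right, and_comm (b := _ ∈ S), ite_and,
    sum_ite_irrel, sum_const_zero, sum_ite_mem, univ_inter, neighborFinset_eq_filter, G.adj_comm]

lemma edgeSum_dirIn (p : V → ℝ) (S : Finset V) :
    edgeSum G p (dirIn G S) = ∑ v ∈ S, ∑ u ∈ G.neighborFinset v, p u / G.degree u :=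
  sum_dirIn G S fun u _ => p u / G.degree u

lemma edgeSum_dirOut (p : V → ℝ) {S : Finset V} (hdeg : ∀ v ∈ S, G.degree v ≠ 0) :
    edgeSum G p (dirOut G S) = ∑ v ∈ S, p v := by
  refine (sum_dirOut G S fun u _ => p u / G.degree u).trans (sum_congr rfl fun u hu => ?_)
  have hu' : (G.degree u : ℝ) ≠ 0 := by exact_mod_cast hdeg u hu
  rw [sum_const, card_neighborFinset_eq_degree, nsmul_eq_mul, mul_div_cancel₀ _ hu']

lemma edgeSum_union_add_edgeSum_inter (p : V → ℝ) (A B : Finset (V × V)) :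
    edgeSum G p (A ∪ B) + edgeSum G p (A ∩ B) = edgeSum G p A + edgeSum G p B :=
  sum_union_inter

lemma vecMul_lazyWalk_apply (p : V → ℝ) (v : V) :
    (p ᵥ* lazyWalk G) v = p v / 2 + (∑ u ∈ G.neighborFinset v, p u / G.degree u) / 2 := by
  simp only [vecMul, dotProduct, lazyWalk, mul_add, sum_add_distrib, mul_ite, mul_zero,
    sum_ite_eq', mem_univ, if_true, neighborFinset_eq_filter, sum_filter, G.adj_comm v, sum_div]
  congr 1
  · ring
  · exact sum_congr rfl fun u _ => by split_ifs <;> ring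

lemma sum_vecMul_lazyWalk (p : V → ℝ) {S : Finset V} (hdeg : ∀ v ∈ S, G.degree v ≠ 0) :
    ∑ v ∈ S, (p ᵥ* lazyWalk G) v = 1 / 2 * edgeSum G p (dirIn G S ∩ dirOut G S) +
      1 / 2 * edgeSum G p (dirIn G S ∪ dirOut G S) := by
  have h := edgeSum_union_add_edgeSum_inter G p (dirIn G S) (dirOut G S)
  rw [edgeSum_dirIn, edgeSum_dirOut G p hdeg] at h
  simp only [vecMul_lazyWalk_apply, sum_add_distrib, ← sum_div]
  linarith

end SimpleGraph

theorem stmt4_general {V : Type*} [Fintype V] [DecidableEq V] (G : SimpleGraph V)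
    [DecidableRel G.Adj] (hdeg : ∀ v, 0 < G.degree v)
    (α : ℝ) (s p : V → ℝ)
    (hp : p = α • s + (1 - α) • (p ᵥ* lazyWalk G)) (S : Finset V) :
    ∑ v ∈ S, p v = α * (∑ v ∈ S, s v) + (1 - α) *
      ((1 / 2) * edgeSum G p (dirIn G S ∩ dirOut G S) +
        (1 / 2) * edgeSum G p (dirIn G S ∪ dirOut G S)) := by
  calc ∑ v ∈ S, p v = ∑ v ∈ S, (α * s v + (1 - α) * (p ᵥ* lazyWalk G) v) :=
        sum_congr rfl fun v _ => congrFun hp v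
    _ = _ := by
      rw [sum_add_distrib, ← mul_sum, ← mul_sum,
        G.sum_vecMul_lazyWalk p fun v _ => (hdeg v).ne']

theorem stmt4 {V : Type*} [Fintype V] [DecidableEq V] (G : SimpleGraph V)
    [DecidableRel G.Adj] (hdeg : ∀ v, 0 < G.degree v)
    (α : ℝ) (hα : 0 < α ∧ α ≤ 1) (s p : V → ℝ)
    (hp : p = α • s + (1 - α) • (p ᵥ* lazyWalk G)) (S : Finset V) :
    ∑ v ∈ S, p v = α * (∑ v ∈ S, s v) + (1 - α) *
      ((1 / 2) * edgeSum G p (dirIn G S ∩ dirOut G S) +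
        (1 / 2) * edgeSum G p (dirIn G S ∪ dirOut G S)) :=
  stmt4_general G hdeg α s p hp S
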